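/- In any execution of the AllConcur+ state machine, if a state with epoch e and unreliable round type (U or U▷) occurs at some position, then every later state of the execution having epoch e also has unreliable round type. Equivalently, within each epoch all reliable states precede all unreliable states: an epoch starts with reliable rounds and contains at most one sequence of unreliable rounds. -/

import Mathlib

/-- Round types: `U` an unreliable round, `Uf` (i.e., U▷) the first unreliable
round following a reliable round, `R` a reliable round. -/
inductive RType
  | U
  | Uf
  | R
  deriving DecidableEq

/-- A state of the AllConcur+ state machine: epoch, round, round type. -/
structure ACState where
  epoch : ℕ
  round : ℕ
  rtype : RType
  deriving DecidableEq

instance : Inhabited ACState := ⟨⟨1, 0, RType.R⟩⟩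

/-- No-fail transitions: `tuu` (from `U` or `U▷`) and `trf`. -/
inductive ACNoFail : ACState → ACState → Prop
  | tuu (e r : ℕ) : ACNoFail ⟨e, r, RType.U⟩ ⟨e, r + 1, RType.U⟩
  | tuu' (e r : ℕ) : ACNoFail ⟨e, r, RType.Uf⟩ ⟨e, r + 1, RType.U⟩
  | trf (e r : ℕ) : ACNoFail ⟨e, r, RType.R⟩ ⟨e, r + 1, RType.Uf⟩

/-- Fail transitions: `tur`, `tfr`, `trr`. -/
inductive ACFail : ACState → ACState → Prop
  | tur (e r : ℕ) (h : 1 ≤ r) : ACFail ⟨e, r, RType.U⟩ ⟨e + 1, r - 1, RType.R⟩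
  | tfr (e r : ℕ) : ACFail ⟨e, r, RType.Uf⟩ ⟨e + 1, r, RType.R⟩
  | trr (e r : ℕ) : ACFail ⟨e, r, RType.R⟩ ⟨e + 1, r + 1, RType.R⟩

/-- The skip transition `tsk`. -/
inductive ACSkip : ACState → ACState → Prop
  | tsk (e r : ℕ) : ACSkip ⟨e, r, RType.R⟩ ⟨e, r + 1, RType.R⟩

/-- A transition of the AllConcur+ state machine. -/
def ACStep (s s' : ACState) : Prop :=
  ACNoFail s s' ∨ ACFail s s' ∨ ACSkip s s'

/-- The initial state `(1, 0, R)`. -/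
def ACInit : ACState := ⟨1, 0, RType.R⟩

/-- An execution: a finite sequence of states starting at the initial state in
which each consecutive pair is related by one of the transitions. -/
def IsExec (l : List ACState) : Prop :=
  l.head? = some ACInit ∧ List.Chain' ACStep l

open Relation

theorem List.IsChain.reflTransGen_get_of_le {α : Type*} {r : α → α → Prop} {l : List α}
    (hl : l.IsChain r) {i j : Fin l.length} (hij : i ≤ j) :
    ReflTransGen r (l.get i) (l.get j) :=
  (hl.imp fun _ _ => ReflTransGen.single).pairwise.rel_get_of_le hij

namespace ACStep

variable {s t : ACState}

theorem epoch_le (h : ACStep s t) : s.epoch ≤ t.epoch := by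
  rcases h with h | h | h <;> cases h <;> simp

/-- A step out of an unreliable round either stays unreliable or is a fail transition,
which opens a new epoch. -/
theorem rtype_ne_R_of_epoch_le (h : ACStep s t) (hs : s.rtype ≠ RType.R)
    (he : t.epoch ≤ s.epoch) : t.rtype ≠ RType.R := by
  rcases h with h | h | h <;> cases h <;> simp_all

theorem epoch_le_of_reflTransGen (h : ReflTransGen ACStep s t) : s.epoch ≤ t.epoch := by
  induction h with
  | refl => rfl
  | tail _ hstep ih => exact ih.trans hstep.epoch_le

theorem rtype_ne_R_of_reflTransGen (h : ReflTransGen ACStep s t) (hs : s.rtype ≠ RType.R)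
    (he : t.epoch = s.epoch) : t.rtype ≠ RType.R := by
  induction h with
  | refl => exact hs
  | @tail u t hsu hstep ih =>
    have hu : u.epoch = s.epoch :=
      le_antisymm (he ▸ hstep.epoch_le) (epoch_le_of_reflTransGen hsu)
    exact hstep.rtype_ne_R_of_epoch_le (ih hu) (by omega)

end ACStep

/-- In any execution, if a state with epoch `e` and unreliable round type
(`U` or `U▷`) occurs at some position, then every later state of the execution
having epoch `e` also has unreliable round type: within each epoch all reliable
states precede all unreliable states. -/
theorem stmt_3 :
    ∀ l : List ACState, IsExec l → ∀ i j : ℕ, ∀ hi : i < l.length,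
      ∀ hj : j < l.length, i ≤ j →
      (l.get ⟨i, hi⟩).rtype ≠ RType.R →
      (l.get ⟨j, hj⟩).epoch = (l.get ⟨i, hi⟩).epoch →
      (l.get ⟨j, hj⟩).rtype ≠ RType.R := by
  intro l hexec i j hi hj hij hunrel hepoch
  exact ACStep.rtype_ne_R_of_reflTransGen
    (hexec.2.reflTransGen_get_of_le (i := ⟨i, hi⟩) (j := ⟨j, hj⟩) hij) hunrel hepoch
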